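/- Let u₀ > 0 and let g : ℝ → ℝ be continuous with g(v) > 0 for all v ∈ (0, u₀], and suppose g(v)/v → 1 as v → 0⁺. Suppose u : [0,∞) → ℝ is differentiable with u(0) = u₀, u(t) > 0 for all t ≥ 0, and u′(t) = −g(u(t)) for all t ≥ 0. Then u(t) → 0 as t → ∞ and (log u(t))/t → −1 as t → ∞; in particular u(t) decays like e^{−t}. -/

import Mathlib

/-!
Since `g > 0` on `(0, u₀]`, the solution can never climb back to the level `u₀` and is
nonincreasing. On any band `[ε, u₀]` the continuous function `g` is bounded below by some
`c > 0`, so `u` drops below every `ε > 0`: hence `u → 0⁺`. Then `(log u)' = -g(u)/u → -1`,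
and a function whose derivative tends to `a` grows like `a t`.
-/

open Set Filter Real Topology

lemma antitoneOn_add_mul_of_hasDerivWithinAt_le {f f' : ℝ → ℝ} {a c : ℝ}
    (hf : ∀ t ∈ Ici a, HasDerivWithinAt f (f' t) (Ici a) t) (hle : ∀ t ∈ Ioi a, f' t ≤ -c) :
    AntitoneOn (fun t => f t + c * t) (Ici a) := by
  have hcont : ContinuousOn f (Ici a) := fun t ht => (hf t ht).continuousWithinAt
  refine antitoneOn_of_hasDerivWithinAt_nonpos (convex_Ici a)
    (hcont.add (continuousOn_const.mul continuousOn_id)) (f' := fun t => f' t + c * 1)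
    (fun t ht => ?_) (fun t ht => ?_)
  · rw [interior_Ici] at ht ⊢
    exact ((hf t (mem_Ici_of_Ioi ht)).mono Ioi_subset_Ici_self).add
      ((hasDerivWithinAt_id t _).const_mul c)
  · rw [interior_Ici] at ht
    linarith [hle t ht]

lemma eventually_div_lt_of_hasDerivAt {f f' : ℝ → ℝ} {b' b : ℝ}
    (hf : ∀ᶠ t in atTop, HasDerivAt f (f' t) t) (hf' : ∀ᶠ t in atTop, f' t ≤ b')
    (hb : b' < b) : ∀ᶠ t in atTop, f t / t < b := by
  obtain ⟨T, hT⟩ := eventually_atTop.1 (hf.and hf')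
  have hanti : AntitoneOn (fun t => f t + -b' * t) (Ici T) :=
    antitoneOn_add_mul_of_hasDerivWithinAt_le (fun t ht => (hT t ht).1.hasDerivWithinAt)
      (fun t ht => by linarith [(hT t (le_of_lt ht)).2])
  have hlim : Tendsto (fun t => b' + (f T - b' * T) / t) atTop (𝓝 b') := by
    simpa using (tendsto_const_nhds (x := b')).add
      ((tendsto_const_nhds (x := f T - b' * T)).div_atTop tendsto_id)
  filter_upwards [eventually_ge_atTop T, eventually_gt_atTop 0, (tendsto_order.1 hlim).2 b hb]
    with t hTt ht hlt
  have hft : f t + -b' * t ≤ f T + -b' * T := hanti self_mem_Ici hTt hTt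
  have hlt' : b' * t + (f T - b' * T) < b * t := by
    have := mul_lt_mul_of_pos_right hlt ht
    rwa [add_mul, div_mul_cancel₀ _ ht.ne'] at this
  rw [div_lt_iff₀ ht]
  linarith

lemma tendsto_div_of_hasDerivAt_tendsto {f f' : ℝ → ℝ} {a : ℝ}
    (hf : ∀ᶠ t in atTop, HasDerivAt f (f' t) t) (hf' : Tendsto f' atTop (𝓝 a)) :
    Tendsto (fun t => f t / t) atTop (𝓝 a) := by
  refine tendsto_order.2 ⟨fun b hb => ?_, fun b hb => ?_⟩
  · obtain ⟨b', hbb', hb'a⟩ := exists_between hb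
    have hneg := eventually_div_lt_of_hasDerivAt (f := -f) (f' := -f') (b' := -b') (b := -b)
      (hf.mono fun t ht => ht.neg)
      (((tendsto_order.1 hf').1 b' hb'a).mono fun t ht => by simp only [Pi.neg_apply]; linarith)
      (by linarith)
    filter_upwards [hneg] with t ht
    rw [Pi.neg_apply, neg_div, neg_lt_neg_iff] at ht
    exact ht
  · obtain ⟨b', hab', hb'b⟩ := exists_between hb
    exact eventually_div_lt_of_hasDerivAt hf (((tendsto_order.1 hf').2 b' hab').mono
      fun _ => le_of_lt) hb'b

section ODE

variable {g u : ℝ → ℝ}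

lemma ode_le_initial (hgpos : ∀ v ∈ Ioc 0 (u 0), 0 < g v) (hupos : ∀ t, 0 ≤ t → 0 < u t)
    (hode : ∀ t ∈ Ici (0 : ℝ), HasDerivWithinAt u (-g (u t)) (Ici 0) t)
    {t : ℝ} (ht : 0 ≤ t) : u t ≤ u 0 := by
  have hcont : ContinuousOn u (Ici 0) := fun t ht => (hode t ht).continuousWithinAt
  refine image_le_of_deriv_right_lt_deriv_boundary (hcont.mono Icc_subset_Ici_self)
    (fun x hx => (hode x hx.1).mono (Ici_subset_Ici.2 hx.1)) (B := fun _ => u 0) (B' := fun _ => 0) le_rfl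
    (fun _ => hasDerivAt_const _ (u 0)) (fun x hx hux => ?_) ⟨ht, le_rfl⟩
  linarith [hgpos (u x) ⟨hupos x hx.1, hux.le⟩]

lemma ode_antitoneOn (hgpos : ∀ v ∈ Ioc 0 (u 0), 0 < g v) (hupos : ∀ t, 0 ≤ t → 0 < u t)
    (hode : ∀ t ∈ Ici (0 : ℝ), HasDerivWithinAt u (-g (u t)) (Ici 0) t) :
    AntitoneOn u (Ici 0) := by
  simpa using antitoneOn_add_mul_of_hasDerivWithinAt_le (c := 0) hode fun t ht =>
    neg_le_neg (hgpos _ ⟨hupos t ht.le, ode_le_initial hgpos hupos hode ht.le⟩).le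

lemma ode_exists_lt (hg : ContinuousOn g (Ioc 0 (u 0))) (hgpos : ∀ v ∈ Ioc 0 (u 0), 0 < g v)
    (hupos : ∀ t, 0 ≤ t → 0 < u t)
    (hode : ∀ t ∈ Ici (0 : ℝ), HasDerivWithinAt u (-g (u t)) (Ici 0) t)
    {ε : ℝ} (hε : 0 < ε) : ∃ t, 0 ≤ t ∧ u t < ε := by
  by_contra! hge
  have hband : Icc ε (u 0) ⊆ Ioc 0 (u 0) := fun v hv => ⟨hε.trans_le hv.1, hv.2⟩
  obtain ⟨v, hv, hmin⟩ := isCompact_Icc.exists_isMinOn (nonempty_Icc.2 (hge 0 le_rfl))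
    (hg.mono hband)
  have hc : 0 < g v := hgpos v (hband hv)
  have hanti := antitoneOn_add_mul_of_hasDerivWithinAt_le (c := g v) hode fun t ht =>
    neg_le_neg (isMinOn_iff.1 hmin (u t) ⟨hge t ht.le, ode_le_initial hgpos hupos hode ht.le⟩)
  have ht : 0 ≤ u 0 / g v := (div_pos (hupos 0 le_rfl) hc).le
  have hdrop : u (u 0 / g v) + g v * (u 0 / g v) ≤ u 0 + g v * 0 :=
    hanti self_mem_Ici ht ht
  rw [mul_div_cancel₀ _ hc.ne'] at hdrop
  linarith [hge _ ht]

lemma ode_tendsto_zero (hg : ContinuousOn g (Ioc 0 (u 0))) (hgpos : ∀ v ∈ Ioc 0 (u 0), 0 < g v)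
    (hupos : ∀ t, 0 ≤ t → 0 < u t)
    (hode : ∀ t ∈ Ici (0 : ℝ), HasDerivWithinAt u (-g (u t)) (Ici 0) t) :
    Tendsto u atTop (𝓝[>] 0) := by
  have hpos : ∀ᶠ t in atTop, 0 < u t := (eventually_ge_atTop 0).mono hupos
  refine tendsto_nhdsWithin_iff.2 ⟨tendsto_order.2 ⟨fun a ha => ?_, fun ε hε => ?_⟩, hpos⟩
  · exact hpos.mono fun t ht => ha.trans ht
  · obtain ⟨T, hT, hlt⟩ := ode_exists_lt hg hgpos hupos hode hε
    filter_upwards [eventually_ge_atTop T] with t ht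
    exact (ode_antitoneOn hgpos hupos hode hT (hT.trans ht) ht).trans_lt hlt

lemma ode_log_div_tendsto
    (hglim : Tendsto (fun v => g v / v) (𝓝[>] 0) (𝓝 1)) (hupos : ∀ t, 0 ≤ t → 0 < u t)
    (hode : ∀ t ∈ Ici (0 : ℝ), HasDerivWithinAt u (-g (u t)) (Ici 0) t)
    (hlim : Tendsto u atTop (𝓝[>] 0)) :
    Tendsto (fun t => log (u t) / t) atTop (𝓝 (-1)) := by
  refine tendsto_div_of_hasDerivAt_tendsto (f' := fun t => -g (u t) / u t) ?_ ?_
  · filter_upwards [eventually_gt_atTop 0] with t ht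
    exact ((hode t ht.le).hasDerivAt (Ici_mem_nhds ht)).log (hupos t ht.le).ne'
  · simpa [neg_div] using (hglim.comp hlim).neg

end ODE

theorem qvoter_ode_decay_general (u₀ : ℝ) (g : ℝ → ℝ)
    (hg : Continuous g) (hgpos : ∀ v ∈ Set.Ioc (0 : ℝ) u₀, 0 < g v)
    (hglim : Filter.Tendsto (fun v => g v / v)
      (nhdsWithin 0 (Set.Ioi 0)) (nhds 1))
    (u : ℝ → ℝ) (hu0 : u 0 = u₀)
    (hupos : ∀ t, 0 ≤ t → 0 < u t)
    (hode : ∀ t ∈ Set.Ici (0 : ℝ),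
      HasDerivWithinAt u (-g (u t)) (Set.Ici (0 : ℝ)) t) :
    Filter.Tendsto u Filter.atTop (nhds 0) ∧
    Filter.Tendsto (fun t => Real.log (u t) / t) Filter.atTop (nhds (-1)) := by
  subst hu0
  have hlim := ode_tendsto_zero hg.continuousOn hgpos hupos hode
  exact ⟨hlim.mono_right nhdsWithin_le_nhds, ode_log_div_tendsto hglim hupos hode hlim⟩

/-- For the limiting ODE `u' = -g(u)` with `g > 0` on `(0, u₀]` and
`g(v)/v → 1` as `v → 0⁺`, solutions started from `u₀ > 0` that stay positive
tend to `0` and satisfy `log u(t) / t → -1`, i.e. `u(t)` decays like `e^{-t}`. -/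
theorem qvoter_ode_decay (u₀ : ℝ) (hu₀ : 0 < u₀) (g : ℝ → ℝ)
    (hg : Continuous g) (hgpos : ∀ v ∈ Set.Ioc (0 : ℝ) u₀, 0 < g v)
    (hglim : Filter.Tendsto (fun v => g v / v)
      (nhdsWithin 0 (Set.Ioi 0)) (nhds 1))
    (u : ℝ → ℝ) (hu0 : u 0 = u₀)
    (hupos : ∀ t, 0 ≤ t → 0 < u t)
    (hode : ∀ t ∈ Set.Ici (0 : ℝ),
      HasDerivWithinAt u (-g (u t)) (Set.Ici (0 : ℝ)) t) :
    Filter.Tendsto u Filter.atTop (nhds 0) ∧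
    Filter.Tendsto (fun t => Real.log (u t) / t) Filter.atTop (nhds (-1)) :=
  qvoter_ode_decay_general u₀ g hg hgpos hglim u hu0 hupos hode
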